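/- arXiv:1912.06080 — 3 statements merged into one kernel-verified Lean document; each statement's English description precedes it below -/
import Mathlib

section
/- On the group ℤ/p × ℤ/p (p prime) with generators a = (1,0), b = (0,1), the operation defined by extending (a*b) = a bilinearly, i.e. (m₁,n₁)*(m₂,n₂) = (m₁n₂ − n₁m₂, 0), is a multiplicative Lie algebra structure that is neither trivial nor given by commutators. -/
/-! The bracket `x * y := (det (x, y), 0)` is alternating and bilinear over any commutative ring,
and `(det (x, y), 0) * z = (det (x, y) z₂, 0)`, so the Jacobi-type sum reduces to the polynomial
identity `det (x, y) z₂ + det (y, z) x₂ + det (z, x) y₂ = 0`. In an abelian group every commutator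
vanishes, so this bracket, which is nonzero as soon as `1 ≠ 0`, is not the commutator bracket. -/

section DetBracket

variable {R : Type*} [CommRing R]

def detBracket (x y : R × R) : R × R := (x.1 * y.2 - x.2 * y.1, 0)

theorem detBracket_self (x : R × R) : detBracket x x = 0 :=
  Prod.ext (by simp only [detBracket, Prod.fst_zero]; ring) rfl

theorem detBracket_add_right (x y z : R × R) :
    detBracket x (y + z) = detBracket x y + detBracket x z :=
  Prod.ext (by simp only [detBracket, Prod.fst_add, Prod.snd_add]; ring) (add_zero 0).symm

theorem detBracket_add_left (x y z : R × R) :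
    detBracket (x + y) z = detBracket x z + detBracket y z :=
  Prod.ext (by simp only [detBracket, Prod.fst_add, Prod.snd_add]; ring) (add_zero 0).symm

theorem detBracket_jacobi (x y z : R × R) :
    detBracket (detBracket x y) z + detBracket (detBracket y z) x +
      detBracket (detBracket z x) y = 0 :=
  Prod.ext (by simp only [detBracket, Prod.fst_add, Prod.fst_zero]; ring)
    (by simp only [detBracket, Prod.snd_add, Prod.snd_zero, add_zero])

theorem detBracket_inl_inr_ne_zero [Nontrivial R] : detBracket ((1, 0) : R × R) (0, 1) ≠ 0 := by
  simp [detBracket, Prod.ext_iff]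

end DetBracket

/-- On `ZMod p × ZMod p` (p prime), the operation `(m₁,n₁)*(m₂,n₂) = (m₁n₂ − n₁m₂, 0)` is a
multiplicative Lie algebra structure (written additively, conjugation trivial) which is
neither trivial nor given by commutators (commutators all vanish in an abelian group). -/
theorem zmodp_sq_nontrivial_mla (p : ℕ) (hp : p.Prime) :
    let G := ZMod p × ZMod p
    let f : G → G → G := fun x y => (x.1 * y.2 - x.2 * y.1, 0)
    (∀ x : G, f x x = 0) ∧
    (∀ x y z : G, f x (y + z) = f x y + f x z) ∧
    (∀ x y z : G, f (x + y) z = f x z + f y z) ∧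
    (∀ x y z : G, f (f x y) z + f (f y z) x + f (f z x) y = 0) ∧
    (∃ x y : G, f x y ≠ 0) ∧
    (∃ x y : G, f x y ≠ x + y - x - y) := by
  intro G f
  have : Fact p.Prime := ⟨hp⟩
  have hne : detBracket ((1, 0) : G) (0, 1) ≠ 0 := detBracket_inl_inr_ne_zero
  refine ⟨detBracket_self, detBracket_add_right, detBracket_add_left, detBracket_jacobi,
    ⟨(1, 0), (0, 1), hne⟩, ⟨(1, 0), (0, 1), ?_⟩⟩
  rwa [add_sub_cancel_left, sub_self]
end

section
/- For the dihedral group Dₙ with n odd, every group homomorphism φ : [Dₙ, Dₙ] → Dₙ is Dₙ-equivariant, i.e. φ(g h g⁻¹) = g φ(h) g⁻¹ for all g ∈ Dₙ and h ∈ [Dₙ, Dₙ]. -/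
/-!
The commutator subgroup of `Dₙ` consists of rotations, being contained in the kernel of the
sign character `Dₙ → {±1}`. Since rotations satisfy `xⁿ = 1` while reflections have order `2`,
for odd `n` the homomorphism `φ` also takes values in the rotations. Conjugation by `g` acts on
the rotations as the power map `x ↦ x ^ sign g`, which commutes with every homomorphism.
-/

theorem MonoidHom.map_conj_of_conj_eq_zpow {G : Type*} [Group G] {S R : Subgroup G}
    (φ : S →* G) (hSR : S ≤ R) (hφ : ∀ s, φ s ∈ R) {g : G} {e : ℤ}
    (hg : ∀ x ∈ R, g * x * g⁻¹ = x ^ e) {h : G} (hh : h ∈ S) (hc : g * h * g⁻¹ ∈ S) :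
    φ ⟨g * h * g⁻¹, hc⟩ = g * φ ⟨h, hh⟩ * g⁻¹ := by
  have hconj : (⟨g * h * g⁻¹, hc⟩ : S) = ⟨h, hh⟩ ^ e :=
    Subtype.ext (by rw [Subgroup.coe_zpow]; exact hg h (hSR hh))
  rw [hconj, map_zpow, hg _ (hφ _)]

namespace DihedralGroup

variable {n : ℕ}

def sign (n : ℕ) : DihedralGroup n →* ℤˣ where
  toFun
    | r _ => 1
    | sr _ => -1
  map_one' := rfl
  map_mul' := by rintro (a | a) (b | b) <;> simp

@[simp] theorem sign_r (i : ZMod n) : sign n (r i) = 1 := rfl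

@[simp] theorem sign_sr (i : ZMod n) : sign n (sr i) = -1 := rfl

theorem mem_ker_sign_iff {x : DihedralGroup n} : x ∈ (sign n).ker ↔ ∃ i, x = r i := by
  cases x <;> simp [MonoidHom.mem_ker]

theorem commutator_le_ker_sign : commutator (DihedralGroup n) ≤ (sign n).ker :=
  Abelianization.commutator_subset_ker _

theorem pow_eq_one_of_mem_ker_sign {x : DihedralGroup n} (hx : x ∈ (sign n).ker) :
    x ^ n = 1 := by
  obtain ⟨i, rfl⟩ := mem_ker_sign_iff.mp hx
  rw [r_pow, ZMod.natCast_self, mul_zero, r_zero]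

theorem mem_ker_sign_of_pow_eq_one {m : ℕ} (hm : Odd m) {x : DihedralGroup n}
    (hx : x ^ m = 1) : x ∈ (sign n).ker := by
  cases x with
  | r i => exact mem_ker_sign_iff.mpr ⟨i, rfl⟩
  | sr i =>
    have h2m : 2 ∣ m := orderOf_sr (n := n) i ▸ orderOf_dvd_of_pow_eq_one hx
    exact absurd (even_iff_two_dvd.mpr h2m) (Nat.not_even_iff_odd.mpr hm)

theorem conj_eq_zpow_sign {x : DihedralGroup n} (hx : x ∈ (sign n).ker) (g : DihedralGroup n) :
    g * x * g⁻¹ = x ^ (sign n g : ℤ) := by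
  obtain ⟨i, rfl⟩ := mem_ker_sign_iff.mp hx
  cases g <;> simp [r_mul_r, sr_mul_r, sr_mul_sr, inv_r, inv_sr]

end DihedralGroup

open DihedralGroup in
/-- For the dihedral group `Dₙ` with `n` odd, every group homomorphism
`φ : [Dₙ,Dₙ] → Dₙ` is `Dₙ`-equivariant. -/
theorem dihedral_hom_equivariant (n : ℕ) (hn : Odd n)
    (φ : ↥(commutator (DihedralGroup n)) →* DihedralGroup n) :
    ∀ (g h : DihedralGroup n) (hh : h ∈ commutator (DihedralGroup n)),
      φ ⟨g * h * g⁻¹, (Subgroup.Normal.conj_mem inferInstance h hh g)⟩ =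
        g * φ ⟨h, hh⟩ * g⁻¹ := by
  intro g h hh
  have hφ (s : commutator (DihedralGroup n)) : φ s ∈ (sign n).ker := by
    have hs : s ^ n = 1 := Subtype.ext (pow_eq_one_of_mem_ker_sign (commutator_le_ker_sign s.2))
    exact mem_ker_sign_of_pow_eq_one hn (by rw [← map_pow, hs, map_one])
  exact φ.map_conj_of_conj_eq_zpow commutator_le_ker_sign hφ (fun x hx => conj_eq_zpow_sign hx g)
    hh _
end

section
/- Let m, n be positive integers with d = gcd(m,n). On G = ℤ/m × ℤ/n with generators a = (1,0) and b = (0,1), for each divisor e of d the map *_e defined bilinearly by (m₁,n₁) *_e (m₂,n₂) = (m₁n₂ − n₁m₂)·g_e, where g_e ∈ G is any element of order e, is a multiplicative Lie algebra structure on G. -/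
section Aux

private lemma zmod_val_cast_add {m e : ℕ} (h : e ∣ m) [NeZero m] (u v : ZMod m) :
    (((u + v).val : ℕ) : ZMod e) = (u.val : ZMod e) + (v.val : ZMod e) := by
  have : ∀ w : ZMod m, ((w.val : ℕ) : ZMod e) = ZMod.castHom h (ZMod e) w := by
    intro w
    simp [ZMod.castHom_apply, ZMod.natCast_val]
  rw [this, this, this, map_add]

private lemma zmod_val_cast_zsmul {m e : ℕ} (h : e ∣ m) [NeZero m] (c : ℤ) (u : ZMod m) :
    (((c • u).val : ℕ) : ZMod e) = (c : ZMod e) * (u.val : ZMod e) := by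
  have key : ∀ w : ZMod m, ((w.val : ℕ) : ZMod e) = ZMod.castHom h (ZMod e) w := by
    intro w
    simp [ZMod.castHom_apply, ZMod.natCast_val]
  rw [key, key, map_zsmul, zsmul_eq_mul]

end Aux

/-- On `G = ZMod m × ZMod n` (m, n positive), for each divisor `e` of `d = gcd m n` and each
element `g` of order `e`, the pairing `(m₁,n₁) * (m₂,n₂) = (m₁n₂ − n₁m₂) • g` (via integer
lifts) is a multiplicative Lie algebra structure on `G` (written additively). -/
theorem zmod_prod_mla_structures (m n : ℕ) (hm : 0 < m) (hn : 0 < n)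
    (e : ℕ) (he : e ∣ Nat.gcd m n) (g : ZMod m × ZMod n) (hg : addOrderOf g = e) :
    let G := ZMod m × ZMod n
    let f : G → G → G := fun x y =>
      ((x.1.val : ℤ) * (y.2.val : ℤ) - (x.2.val : ℤ) * (y.1.val : ℤ)) • g
    (∀ x : G, f x x = 0) ∧
    (∀ x y z : G, f x (y + z) = f x y + f x z) ∧
    (∀ x y z : G, f (x + y) z = f x z + f y z) ∧
    (∀ x y z : G, f (f x y) z + f (f y z) x + f (f z x) y = 0) := by
  intro G f
  haveI : NeZero m := ⟨hm.ne'⟩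
  haveI : NeZero n := ⟨hn.ne'⟩
  have hem : e ∣ m := he.trans (Nat.gcd_dvd_left m n)
  have hen : e ∣ n := he.trans (Nat.gcd_dvd_right m n)
  -- e • g = 0
  have heg : (e : ℤ) • g = 0 := by
    rw [natCast_zsmul, ← hg, addOrderOf_nsmul_eq_zero]
  -- key: equal coefficients mod e give equal multiples of g
  have key : ∀ a b : ℤ, ((a : ZMod e) = (b : ZMod e)) → a • g = b • g := by
    intro a b h
    have hdvd : (e : ℤ) ∣ a - b := by
      have : ((a - b : ℤ) : ZMod e) = 0 := by push_cast; rw [h]; ring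
      exact (ZMod.intCast_zmod_eq_zero_iff_dvd _ _).mp this
    obtain ⟨k, hk⟩ := hdvd
    have : a = b + (e : ℤ) * k := by linarith [hk]
    rw [this, add_zsmul, mul_comm, mul_zsmul, heg, smul_zero, add_zero]
  refine ⟨?_, ?_, ?_, ?_⟩
  · intro x
    show ((x.1.val : ℤ) * (x.2.val : ℤ) - (x.2.val : ℤ) * (x.1.val : ℤ)) • g = 0
    rw [show (x.1.val : ℤ) * (x.2.val : ℤ) - (x.2.val : ℤ) * (x.1.val : ℤ) = 0 by ring]
    exact zero_zsmul g
  · intro x y z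
    show _ = _
    rw [← add_zsmul]
    apply key
    have h1 : (y + z).1 = y.1 + z.1 := rfl
    have h2 : (y + z).2 = y.2 + z.2 := rfl
    push_cast
    rw [h1, h2, zmod_val_cast_add hem, zmod_val_cast_add hen]
    ring
  · intro x y z
    show _ = _
    rw [← add_zsmul]
    apply key
    have h1 : (x + y).1 = x.1 + y.1 := rfl
    have h2 : (x + y).2 = x.2 + y.2 := rfl
    push_cast
    rw [h1, h2, zmod_val_cast_add hem, zmod_val_cast_add hen]
    ring
  · intro x y z
    show _ + _ + _ = 0
    rw [← add_zsmul, ← add_zsmul]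
    rw [show (0 : G) = (0 : ℤ) • g by rw [zero_zsmul]]
    apply key
    have hsm : ∀ (c : ℤ), (c • g).1 = c • g.1 := fun c => rfl
    have hsn : ∀ (c : ℤ), (c • g).2 = c • g.2 := fun c => rfl
    push_cast
    rw [hsm, hsn, hsm, hsn, hsm, hsn]
    rw [zmod_val_cast_zsmul hem, zmod_val_cast_zsmul hen,
        zmod_val_cast_zsmul hem, zmod_val_cast_zsmul hen,
        zmod_val_cast_zsmul hem, zmod_val_cast_zsmul hen]
    push_cast
    ring
end
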